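/- Fix a real θ > 0 and for each integer k ≥ 1 let g_θ(k) = θ·(H_k − 1)/(θ + k). Then for every integer k ≥ 1, g_θ(k+1) > g_θ(k) if and only if H_k < 2 + (θ − 1)/(k + 1). Moreover, there is a smallest positive integer k_θ with H_{k_θ} ≥ 2 + (θ − 1)/(k_θ + 1), and the supremum of g_θ over all integers k ≥ 1 is attained at k = k_θ, i.e., g_θ(k) ≤ g_θ(k_θ) for all k ≥ 1. -/
import Mathlib

noncomputable def H (k : ℕ) : ℝ := ∑ i ∈ Finset.Icc 1 k, (1 : ℝ) / i

lemma H_succ (k : ℕ) : H (k+1) = H k + 1/((k:ℝ)+1) := by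
  unfold H
  rw [Finset.sum_Icc_succ_top (by omega : 1 ≤ k+1)]
  push_cast; ring

lemma H_eq_range (k : ℕ) : H k = ∑ i ∈ Finset.range k, (1/((i:ℝ)+1)) := by
  induction k with
  | zero => simp [H]
  | succ n ih => rw [H_succ, ih, Finset.sum_range_succ]

lemma g_iff (θ : ℝ) (hθ : 0 < θ) (k : ℕ) :
    (θ * (H (k+1) - 1) / (θ + ((k:ℝ)+1)) > θ * (H k - 1) / (θ + (k:ℝ)) ↔
      H k < 2 + (θ-1)/((k:ℝ)+1)) := by
  have hx : (0:ℝ) ≤ (k:ℝ) := Nat.cast_nonneg k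
  have h1 : (0:ℝ) < θ + k := by linarith
  have h2 : (0:ℝ) < θ + ((k:ℝ)+1) := by linarith
  have h3 : (0:ℝ) < (k:ℝ)+1 := by linarith
  have huθ : θ * (1/((k:ℝ)+1)) * ((k:ℝ)+1) = θ := by field_simp
  rw [H_succ, gt_iff_lt, div_lt_div_iff₀ h1 h2]
  constructor
  · intro A
    by_contra hc
    push_neg at hc
    have hc' := mul_le_mul_of_nonneg_left hc hθ.le
    have hd : θ * (2 + (θ-1) * (1/((k:ℝ)+1))) ≤ θ * H k := by
      have : (θ-1)/((k:ℝ)+1) = (θ-1) * (1/((k:ℝ)+1)) := by ring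
      rw [this] at hc'
      exact hc'
    nlinarith [hd, A, huθ]
  · intro A
    have A' := mul_lt_mul_of_pos_left A hθ
    have hd : θ * H k < θ * (2 + (θ-1) * (1/((k:ℝ)+1))) := by
      have : (θ-1)/((k:ℝ)+1) = (θ-1) * (1/((k:ℝ)+1)) := by ring
      rw [this] at A'
      exact A'
    nlinarith [hd, huθ]

lemma absorb (θ : ℝ) (hθ : 0 < θ) (k : ℕ)
    (h : 2 + (θ-1)/((k:ℝ)+1) ≤ H k) :
    2 + (θ-1)/(((k:ℝ)+1)+1) ≤ H (k+1) := by
  have hx : (0:ℝ) ≤ (k:ℝ) := Nat.cast_nonneg k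
  have h3 : (0:ℝ) < (k:ℝ)+1 := by linarith
  have h4 : (0:ℝ) < (k:ℝ)+2 := by linarith
  rw [H_succ]
  have key : (θ-1)/(((k:ℝ)+1)+1) ≤ (θ-1)/((k:ℝ)+1) + 1/((k:ℝ)+1) := by
    have : (θ-1)/((k:ℝ)+1) + 1/((k:ℝ)+1) = θ/((k:ℝ)+1) := by ring
    rw [this, show ((k:ℝ)+1)+1 = (k:ℝ)+2 by ring, div_le_div_iff₀ h4 h3]
    nlinarith
  linarith

lemma chain (f : ℕ → ℝ) : ∀ b a, a ≤ b → (∀ j, a ≤ j → j < b → f j ≤ f (j+1)) → f a ≤ f b := by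
  intro b
  induction b with
  | zero => intro a hab _; simp [Nat.le_zero.mp hab]
  | succ n ih =>
    intro a hab h
    rcases Nat.lt_or_ge a (n+1) with h' | h'
    · have ha : a ≤ n := Nat.lt_succ_iff.mp h'
      have := ih a ha (fun j hj hj' => h j hj (hj'.trans (Nat.lt_succ_self n)))
      exact this.trans (h n ha (Nat.lt_succ_self n))
    · have : a = n+1 := le_antisymm hab h'
      simp [this]

noncomputable def gfun (θ : ℝ) (n : ℕ) : ℝ := θ * (H n - 1) / (θ + (n:ℝ))

lemma gfun_iff (θ : ℝ) (hθ : 0 < θ) (k : ℕ) :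
    (gfun θ (k+1) > gfun θ k ↔ H k < 2 + (θ-1)/((k:ℝ)+1)) := by
  unfold gfun
  rw [show ((k+1:ℕ):ℝ) = (k:ℝ)+1 by push_cast; ring]
  exact g_iff θ hθ k

lemma chainD (f : ℕ → ℝ) (b a : ℕ) (hab : a ≤ b)
    (h : ∀ j, a ≤ j → j < b → f (j+1) ≤ f j) : f b ≤ f a := by
  have := chain (fun n => -f n) b a hab (fun j hj hj' => by
    simp only [neg_le_neg_iff]
    exact h j hj hj')
  simp only [neg_le_neg_iff] at this
  exact this

/-- For `θ > 0` and `g_θ(k) = θ (H k − 1)/(θ + k)`: `g_θ(k+1) > g_θ(k)` iff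
`H k < 2 + (θ − 1)/(k + 1)`; moreover there is a smallest `k₀ ≥ 1` with
`H k₀ ≥ 2 + (θ − 1)/(k₀ + 1)`, and `g_θ` attains its maximum over `k ≥ 1` at `k₀`. -/
theorem g_increasing_iff_and_max (θ : ℝ) (hθ : 0 < θ) :
    (∀ k : ℕ, 1 ≤ k →
      (θ * (H (k + 1) - 1) / (θ + ((k : ℝ) + 1)) > θ * (H k - 1) / (θ + (k : ℝ)) ↔
        H k < 2 + (θ - 1) / ((k : ℝ) + 1))) ∧
    ∃ k₀ : ℕ, 1 ≤ k₀ ∧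
      2 + (θ - 1) / ((k₀ : ℝ) + 1) ≤ H k₀ ∧
      (∀ j : ℕ, 1 ≤ j → j < k₀ → H j < 2 + (θ - 1) / ((j : ℝ) + 1)) ∧
      ∀ k : ℕ, 1 ≤ k →
        θ * (H k - 1) / (θ + (k : ℝ)) ≤ θ * (H k₀ - 1) / (θ + (k₀ : ℝ)) := by
  classical
  refine ⟨fun k _ => g_iff θ hθ k, ?_⟩
  have hdiv : ∃ n : ℕ, (2:ℝ) + θ ≤ H n := by
    have T := Filter.tendsto_atTop.mp Real.tendsto_sum_range_one_div_nat_succ_atTop ((2:ℝ)+θ)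
    obtain ⟨n, hn⟩ := T.exists
    exact ⟨n, by rwa [H_eq_range]⟩
  have hbound : ∀ n : ℕ, (θ-1)/((n:ℝ)+1) ≤ θ := by
    intro n
    have h3 : (1:ℝ) ≤ (n:ℝ)+1 := by
      have : (0:ℝ) ≤ (n:ℝ) := Nat.cast_nonneg n
      linarith
    rcases le_or_gt 1 θ with h | h
    · calc (θ-1)/((n:ℝ)+1) ≤ θ-1 := div_le_self (by linarith) h3
        _ ≤ θ := by linarith
    · calc (θ-1)/((n:ℝ)+1) ≤ 0 := div_nonpos_iff.mpr (Or.inr ⟨by linarith, by linarith⟩)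
        _ ≤ θ := hθ.le
  have hQ : ∃ n : ℕ, 1 ≤ n ∧ 2 + (θ-1)/((n:ℝ)+1) ≤ H n := by
    obtain ⟨n, hn⟩ := hdiv
    have hn1 : 1 ≤ n := by
      by_contra hc
      interval_cases n
      · simp [H] at hn; linarith
    exact ⟨n, hn1, le_trans (by linarith [hbound n]) hn⟩
  obtain ⟨hk1, hk2⟩ := Nat.find_spec hQ
  refine ⟨Nat.find hQ, hk1, hk2, ?_, ?_⟩
  · intro j hj hjk
    have := Nat.find_min hQ hjk
    push_neg at this
    exact this hj
  · have hP : ∀ n, Nat.find hQ ≤ n → 2 + (θ-1)/((n:ℝ)+1) ≤ H n := by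
      intro n hn
      induction n, hn using Nat.le_induction with
      | base => exact hk2
      | succ m hm ih =>
        have := absorb θ hθ m ih
        push_cast
        convert this using 3 <;> push_cast <;> ring
    intro k hk
    show gfun θ k ≤ gfun θ (Nat.find hQ)
    rcases le_or_gt k (Nat.find hQ) with hle | hlt
    · refine chain (gfun θ) (Nat.find hQ) k hle ?_
      intro j hj hjk
      have hjlt : H j < 2 + (θ-1)/((j:ℝ)+1) := by
        have := Nat.find_min hQ hjk
        push_neg at this
        exact this (le_trans hk hj)
      exact ((gfun_iff θ hθ j).mpr hjlt).le
    · refine chainD (gfun θ) k (Nat.find hQ) hlt.le ?_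
      intro j hj hjk
      have hPj : 2 + (θ-1)/((j:ℝ)+1) ≤ H j := hP j hj
      exact not_lt.mp (fun hcon => absurd ((gfun_iff θ hθ j).mp hcon) (not_lt.mpr hPj))
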